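/- arXiv:alg-geom/9605001 — 2 statements merged into one kernel-verified Lean document; each statement's English description precedes it below -/
import Mathlib

section
/- An O'-linear map f : O_K → K has image contained in O' if and only if f is multiplication by some element x ∈ ℘ = t·O_K; consequently the map sending x ∈ ℘ to multiplication-by-x is an isomorphism of O'-modules ℘ ≅ Hom_{O'}(O_K, O'). Moreover every O'-linear endomorphism of O_K is multiplication by a unique element of O_K, so Hom_{O'}(O_K, O_K) ≅ O_K. -/
set_option synthInstance.maxHeartbeats 1000000
set_option maxHeartbeats 1000000

noncomputable section

open HahnSeries

namespace TwoDimLocal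

variable (k : Type) [Field k]

/-- `k((u))`, the field of Laurent series over `k`. -/
abbrev K1 := LaurentSeries k

/-- `K = k((u))((t))`, the two-dimensional local field of iterated Laurent series. -/
abbrev K := LaurentSeries (LaurentSeries k)

section Nonneg

variable (F : Type) [Field F]

lemma order_nonneg_of_support {x : LaurentSeries F} (hx : x ≠ 0)
    (h : ∀ n : ℤ, n < 0 → x.coeff n = 0) : 0 ≤ x.order := by
  by_contra hlt
  push_neg at hlt
  exact hx (coeff_order_eq_zero.1 (h x.order hlt))

/-- The subring `F[[X]] ⊆ F((X))` of power series, described by vanishing of the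
coefficients of negative index. -/
def nonneg : Subring (LaurentSeries F) where
  carrier := {x | ∀ n : ℤ, n < 0 → x.coeff n = 0}
  zero_mem' := by intro n _; simp
  one_mem' := by
    intro n hn
    rw [HahnSeries.coeff_one, if_neg (by omega)]
  add_mem' := by
    intro a b ha hb n hn
    rw [HahnSeries.coeff_add, ha n hn, hb n hn, add_zero]
  neg_mem' := by
    intro a ha n hn
    rw [HahnSeries.coeff_neg, ha n hn, neg_zero]
  mul_mem' := by
    intro a b ha hb n hn
    by_contra hne
    obtain ⟨i, hi, j, hj, rfl⟩ := support_mul_subset ((mem_support _ _).2 hne)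
    rw [mem_support] at hi hj
    have hi0 : 0 ≤ i := by by_contra h; push_neg at h; exact hi (ha i h)
    have hj0 : 0 ≤ j := by by_contra h; push_neg at h; exact hj (hb j h)
    exact absurd hn (not_lt.2 (add_nonneg hi0 hj0))

lemma mem_nonneg_iff {x : LaurentSeries F} :
    x ∈ nonneg F ↔ ∀ n : ℤ, n < 0 → x.coeff n = 0 := Iff.rfl

lemma coeff_zero_mul {x y : LaurentSeries F} (hx : x ∈ nonneg F) (hy : y ∈ nonneg F) :
    (x * y).coeff 0 = x.coeff 0 * y.coeff 0 := by
  rcases eq_or_ne x 0 with rfl | hx0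
  · simp
  rcases eq_or_ne y 0 with rfl | hy0
  · simp
  have hxo : 0 ≤ x.order := order_nonneg_of_support F hx0 hx
  have hyo : 0 ≤ y.order := order_nonneg_of_support F hy0 hy
  rcases lt_or_eq_of_le hxo with hxo' | hxo'
  · have h1 : x.coeff 0 = 0 := HahnSeries.coeff_eq_zero_of_lt_order hxo'
    have h2 : (x * y).coeff 0 = 0 := by
      apply HahnSeries.coeff_eq_zero_of_lt_order
      rw [HahnSeries.order_mul hx0 hy0]
      omega
    rw [h1, h2, zero_mul]
  rcases lt_or_eq_of_le hyo with hyo' | hyo'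
  · have h1 : y.coeff 0 = 0 := HahnSeries.coeff_eq_zero_of_lt_order hyo'
    have h2 : (x * y).coeff 0 = 0 := by
      apply HahnSeries.coeff_eq_zero_of_lt_order
      rw [HahnSeries.order_mul hx0 hy0]
      omega
    rw [h1, h2, mul_zero]
  have := HahnSeries.coeff_mul_order_add_order x y
  rw [HahnSeries.leadingCoeff_eq, HahnSeries.leadingCoeff_eq, ← hxo', ← hyo'] at this
  simpa using this

end Nonneg

/-- The ring of integers `O_K = k((u))[[t]]` of `K` with respect to the `t`-adic valuation. -/
def OK : Subring (K k) := nonneg (K1 k)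

/-- The rank-2 valuation subring `O' = p⁻¹(k[[u]]) ⊆ K`, consisting of those `t`-adic
integers whose constant `t`-coefficient is a power series in `u`. -/
def Oprime : Subring (K k) where
  carrier := {x | x ∈ OK k ∧ x.coeff 0 ∈ nonneg k}
  zero_mem' := ⟨Subring.zero_mem _, by simp⟩
  one_mem' := ⟨Subring.one_mem _, by
    intro n hn
    rw [show ((1 : K k).coeff 0) = 1 from by rw [HahnSeries.coeff_one]; simp]
    rw [HahnSeries.coeff_one, if_neg (by omega)]⟩
  add_mem' := by
    rintro a b ⟨ha1, ha2⟩ ⟨hb1, hb2⟩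
    refine ⟨Subring.add_mem _ ha1 hb1, ?_⟩
    rw [HahnSeries.coeff_add]
    exact Subring.add_mem _ ha2 hb2
  neg_mem' := by
    rintro a ⟨ha1, ha2⟩
    refine ⟨Subring.neg_mem _ ha1, ?_⟩
    rw [HahnSeries.coeff_neg]
    exact Subring.neg_mem _ ha2
  mul_mem' := by
    rintro a b ⟨ha1, ha2⟩ ⟨hb1, hb2⟩
    refine ⟨Subring.mul_mem _ ha1 hb1, ?_⟩
    rw [coeff_zero_mul (K1 k) ha1 hb1]
    exact Subring.mul_mem _ ha2 hb2

lemma Oprime_le_OK : (Oprime k : Set (K k)) ⊆ (OK k : Set (K k)) := fun _ h => h.1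

/-- The local parameter `t` of `K = k((u))((t))`. -/
def t : K k := HahnSeries.single (1 : ℤ) 1

/-- The local parameter `u` of `K = k((u))((t))`, i.e. the image in `K` of the
local parameter of `k((u))`. -/
def u : K k := HahnSeries.C (HahnSeries.single (1 : ℤ) (1 : k))

/-- The maximal ideal `m = p⁻¹(u·k[[u]])` of `O'`, as a subset of `K`. -/
def mSet : Set (K k) := {x | x ∈ Oprime k ∧ (x.coeff 0).coeff 0 = 0}

/-- The rank-two valuation `ν' : K* → ℤ ×ₗ ℤ`: the first component is the `t`-adic order,
the second one the `u`-adic order of the leading `t`-coefficient. (Junk value at `0`.) -/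
def nu (x : K k) : ℤ ×ₗ ℤ := toLex (x.order, (x.coeff x.order).order)

end TwoDimLocal

namespace TwoDimLocal

variable (k : Type) [Field k]

/-- `O_K` viewed as an `O'`-submodule of `K`. -/
def OKmod : Submodule (Oprime k) (K k) where
  carrier := OK k
  zero_mem' := Subring.zero_mem _
  add_mem' := fun ha hb => Subring.add_mem _ ha hb
  smul_mem' := by
    intro c x hx
    show (c : K k) • x ∈ OK k
    rw [smul_eq_mul]
    exact Subring.mul_mem _ c.2.1 hx

end TwoDimLocal

/-!
Every `y ∈ O_K` lands in `O'` after multiplication by a suitable power of `u`, so by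
`O'`-linearity an `O'`-linear map `f : O_K → K` is multiplication by `x = f 1`. Hence `f` maps
into `O_K` iff `x ∈ O_K`, and into `O'` iff `x · O_K ⊆ O'`; testing the latter on the elements
`u⁻ᴺ ∈ O_K` forces the constant `t`-coefficient of `x` to vanish, i.e. `x ∈ t · O_K`.
-/

section MulByValueAtOne

variable {L : Type*} [Field L] {R : Subring L} {M : Submodule R L}

theorem LinearMap.apply_eq_apply_one_mul (hM : (1 : L) ∈ M)
    (hden : ∀ y ∈ M, ∃ a ∈ R, a ≠ 0 ∧ a * y ∈ R) (f : M →ₗ[R] L) (y : M) :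
    f y = f ⟨1, hM⟩ * y := by
  obtain ⟨a, ha, ha0, hay⟩ := hden y y.2
  have hsmul : (⟨a, ha⟩ : R) • y = (⟨a * y, hay⟩ : R) • (⟨1, hM⟩ : M) :=
    Subtype.ext (mul_one _).symm
  have key : a * f y = a * y * f ⟨1, hM⟩ := by
    simpa only [map_smul, Subring.smul_def, smul_eq_mul] using congrArg f hsmul
  rw [mul_assoc, mul_comm (y : L)] at key
  exact mul_left_cancel₀ ha0 key

theorem LinearMap.existsUnique_mul_iff (hM : (1 : L) ∈ M) {f : M →ₗ[R] L}
    (hf : ∀ y, f y = f ⟨1, hM⟩ * y) (P : L → Prop) :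
    (∃! x : L, P x ∧ ∀ y : M, f y = x * y) ↔ P (f ⟨1, hM⟩) := by
  have eq_of_mul : ∀ x : L, (∀ y : M, f y = x * y) → x = f ⟨1, hM⟩ := fun x hx => by
    simpa using (hx ⟨1, hM⟩).symm
  constructor
  · rintro ⟨x, ⟨hPx, hx⟩, -⟩
    rwa [← eq_of_mul x hx]
  · exact fun hP => ⟨_, ⟨hP, hf⟩, fun x hx => eq_of_mul x hx.2⟩

end MulByValueAtOne

namespace TwoDimLocal

section LaurentSeries

variable {F : Type} [Field F]

theorem exists_single_mul_mem_nonneg (g : LaurentSeries F) :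
    ∃ N : ℤ, 0 ≤ N ∧ single N 1 * g ∈ nonneg F := by
  refine ⟨max 0 (-g.order), le_max_left _ _, fun n hn => ?_⟩
  rw [coeff_single_mul, one_mul]
  exact coeff_eq_zero_of_lt_order (by omega)

theorem eq_zero_of_forall_mul_single_mem_nonneg (g : LaurentSeries F)
    (h : ∀ N : ℤ, g * single (-N) 1 ∈ nonneg F) : g = 0 := by
  ext n
  simpa [coeff_mul_single] using h (n + 1) (-1) (by omega)

end LaurentSeries

variable (k : Type) [Field k]

theorem single_zero_mem_OK (g : K1 k) : (single 0 g : K k) ∈ OK k := fun n hn => by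
  rw [coeff_single_of_ne hn.ne]

theorem single_zero_mem_Oprime {g : K1 k} (hg : g ∈ nonneg k) : (single 0 g : K k) ∈ Oprime k :=
  ⟨single_zero_mem_OK k g, by rwa [coeff_single_same]⟩

theorem exists_mul_mem_Oprime {y : K k} (hy : y ∈ OK k) :
    ∃ a ∈ Oprime k, a ≠ 0 ∧ a * y ∈ Oprime k := by
  obtain ⟨N, hN, hNy⟩ := exists_single_mul_mem_nonneg (y.coeff 0)
  refine ⟨single 0 (single N 1), single_zero_mem_Oprime k fun n hn => ?_,
    single_ne_zero (single_ne_zero one_ne_zero),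
    Subring.mul_mem _ (single_zero_mem_OK k _) hy, ?_⟩
  · rw [coeff_single_of_ne (by omega)]
  · rwa [coeff_single_zero_mul]

theorem coeff_t_mul (z : K k) (n : ℤ) : (t k * z).coeff n = z.coeff (n - 1) := by
  rw [t, coeff_single_mul, one_mul]

theorem t_mul_single_neg_one : t k * single (-1) 1 = 1 := by
  rw [t, single_mul_single, add_neg_cancel, one_mul, single_zero_one]

theorem mem_t_mul_OK_iff (x : K k) :
    (∃ z ∈ OK k, x = t k * z) ↔ x ∈ OK k ∧ x.coeff 0 = 0 := by
  constructor
  · rintro ⟨z, hz, rfl⟩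
    refine ⟨fun n hn => ?_, ?_⟩ <;> rw [coeff_t_mul] <;> exact hz _ (by omega)
  · rintro ⟨hx, hx0⟩
    refine ⟨single (-1) 1 * x, fun n hn => ?_, ?_⟩
    · rw [coeff_single_mul, one_mul]
      rcases (show n + 1 ≤ 0 by omega).lt_or_eq with hlt | heq
      · exact hx _ (by simpa using hlt)
      · simpa [heq] using hx0
    · rw [← mul_assoc, t_mul_single_neg_one, one_mul]

theorem forall_mul_mem_Oprime_iff (x : K k) :
    (∀ y : OKmod k, x * y ∈ Oprime k) ↔ ∃ z ∈ OK k, x = t k * z := by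
  rw [mem_t_mul_OK_iff]
  constructor
  · intro h
    have hx : x ∈ Oprime k := by simpa using h ⟨1, Subring.one_mem _⟩
    refine ⟨hx.1, eq_zero_of_forall_mul_single_mem_nonneg _ fun N => ?_⟩
    simpa [coeff_mul_single_zero] using (h ⟨_, single_zero_mem_OK k (single (-N) 1)⟩).2
  · rintro ⟨hx, hx0⟩ y
    refine ⟨Subring.mul_mem _ hx y.2, ?_⟩
    rw [coeff_zero_mul (K1 k) hx y.2, hx0, zero_mul]
    exact Subring.zero_mem _

theorem forall_mul_mem_OK_iff (x : K k) : (∀ y : OKmod k, x * y ∈ OK k) ↔ x ∈ OK k :=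
  ⟨fun h => by simpa using h ⟨1, Subring.one_mem _⟩, fun hx y => Subring.mul_mem _ hx y.2⟩

/-- An `O'`-linear map `f : O_K → K` has image in `O'` iff it is
multiplication by a (unique) element of `℘ = t·O_K`; hence `Hom_{O'}(O_K, O') ≅ ℘`.
Moreover an `O'`-linear map `f : O_K → K` has image in `O_K` iff it is multiplication
by a unique element of `O_K`; hence `Hom_{O'}(O_K, O_K) ≅ O_K`. -/
theorem hom_OK_to_O_iso_wp :
    (∀ f : ↥(OKmod k) →ₗ[Oprime k] K k,
      (∀ y, f y ∈ Oprime k) ↔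
        ∃! x : K k, (∃ z ∈ OK k, x = t k * z) ∧ ∀ y : ↥(OKmod k), f y = x * (y : K k)) ∧
    (∀ f : ↥(OKmod k) →ₗ[Oprime k] K k,
      (∀ y, f y ∈ OK k) ↔
        ∃! x : K k, x ∈ OK k ∧ ∀ y : ↥(OKmod k), f y = x * (y : K k)) := by
  have hOne : (1 : K k) ∈ OKmod k := Subring.one_mem (OK k)
  have hf (f : OKmod k →ₗ[Oprime k] K k) : ∀ y, f y = f ⟨1, hOne⟩ * y :=
    f.apply_eq_apply_one_mul hOne fun _ hy => exists_mul_mem_Oprime k hy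
  refine ⟨fun f => ?_, fun f => ?_⟩
  · rw [f.existsUnique_mul_iff hOne (hf f), ← forall_mul_mem_Oprime_iff]
    exact forall_congr' fun y => by rw [← hf f]
  · rw [f.existsUnique_mul_iff hOne (hf f), ← forall_mul_mem_OK_iff]
    exact forall_congr' fun y => by rw [← hf f]

end TwoDimLocal
end
end

section
/- For n = 2 the Weyl group W = N/T has the presentation W = ⟨w₀, w₁, w₂ | w₀² = w₁² = w₂² = e, (w₀w₁w₂)² = e⟩: the homomorphism from the presented group on generators x₀, x₁, x₂ with relations x₀², x₁², x₂², (x₀x₁x₂)² to W sending x₀, x₁, x₂ to the classes of the matrices w₀ = [[0,1],[−1,0]], w₁ = [[0,t],[−t⁻¹,0]], w₂ = [[0,u],[−u⁻¹,0]] respectively is a group isomorphism. -/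
set_option synthInstance.maxHeartbeats 1000000
set_option maxHeartbeats 1000000

noncomputable section

open HahnSeries

namespace TwoDimLocal

open Matrix


open Matrix

section Generic

variable (F : Type) [Field F] (n : ℕ)

variable {F n} in
lemma mul_entry {A B : Matrix (Fin n) (Fin n) F} {σ : Equiv.Perm (Fin n)}
    (hA : ∀ i j, j ≠ σ i → A i j = 0) (i j : Fin n) :
    (A * B) i j = A i (σ i) * B (σ i) j := by
  rw [Matrix.mul_apply]
  refine Finset.sum_eq_single (σ i) (fun l _ hl => ?_) (fun h => absurd (Finset.mem_univ _) h)
  rw [hA i l hl, zero_mul]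

variable {F n} in
lemma mul_inv_entry (g : SpecialLinearGroup (Fin n) F) {σ : Equiv.Perm (Fin n)}
    (hσ2 : ∀ i j, j ≠ σ i → g.val i j = 0) (i j : Fin n) :
    g.val i (σ i) * (g⁻¹ : SpecialLinearGroup (Fin n) F).val (σ i) j
      = (1 : Matrix (Fin n) (Fin n) F) i j := by
  have h : g.val * (g⁻¹ : SpecialLinearGroup (Fin n) F).val = 1 := by
    rw [← Matrix.SpecialLinearGroup.coe_mul, mul_inv_cancel, Matrix.SpecialLinearGroup.coe_one]
  rw [← mul_entry hσ2 i j, h]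

/-- The subgroup of monomial matrices in `SL(n, F)`. -/
def monomialSubgroup : Subgroup (SpecialLinearGroup (Fin n) F) where
  carrier := {g | ∃ σ : Equiv.Perm (Fin n),
    (∀ i, g.val i (σ i) ≠ 0) ∧ ∀ i j, j ≠ σ i → g.val i j = 0}
  one_mem' := by
    refine ⟨1, fun i => ?_, fun i j hj => ?_⟩
    · simp
    · exact Matrix.one_apply_ne' hj
  mul_mem' := by
    rintro g h ⟨σ, hσ1, hσ2⟩ ⟨τ, hτ1, hτ2⟩
    have hmul : ∀ i j, (g * h).val i j = g.val i (σ i) * h.val (σ i) j := by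
      intro i j
      rw [Matrix.SpecialLinearGroup.coe_mul]
      exact mul_entry hσ2 i j
    refine ⟨σ.trans τ, fun i => ?_, fun i j hj => ?_⟩
    · rw [show (σ.trans τ) i = τ (σ i) from rfl, hmul]
      exact mul_ne_zero (hσ1 i) (hτ1 (σ i))
    · rw [hmul, hτ2 (σ i) j hj, mul_zero]
  inv_mem' := by
    rintro g ⟨σ, hσ1, hσ2⟩
    refine ⟨σ⁻¹, fun l => ?_, fun l j hj => ?_⟩
    · have h := mul_inv_entry g hσ2 (σ⁻¹ l) (σ⁻¹ l)
      rw [show σ (σ⁻¹ l) = l from Equiv.apply_symm_apply σ l] at h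
      rw [Matrix.one_apply_eq] at h
      intro hzero
      rw [hzero, mul_zero] at h
      exact zero_ne_one h
    · have h := mul_inv_entry g hσ2 (σ⁻¹ l) j
      rw [show σ (σ⁻¹ l) = l from Equiv.apply_symm_apply σ l] at h
      rw [Matrix.one_apply_ne' hj] at h
      have hσ1' : g.val (σ⁻¹ l) l ≠ 0 := by
        have h2 := hσ1 (σ⁻¹ l)
        rwa [show σ (σ⁻¹ l) = l from Equiv.apply_symm_apply σ l] at h2
      rcases mul_eq_zero.1 h with h' | h'
      · exact absurd h' hσ1'
      · exact h'

variable (R : Subring F)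

/-- The subgroup `T` of diagonal matrices with diagonal entries invertible in `R`,
inside the monomial subgroup `N`. -/
def diagTSubgroup : Subgroup ↥(monomialSubgroup F n) where
  carrier := {g | (∀ i j : Fin n, i ≠ j → (g : SpecialLinearGroup (Fin n) F).val i j = 0) ∧
    ∀ i : Fin n, (g : SpecialLinearGroup (Fin n) F).val i i ∈ R ∧
      ∃ w ∈ R, (g : SpecialLinearGroup (Fin n) F).val i i * w = 1}
  one_mem' := by
    constructor
    · intro i j hij
      show (1 : Matrix (Fin n) (Fin n) F) i j = 0
      exact Matrix.one_apply_ne hij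
    · intro i
      have h1 : ((1 : ↥(monomialSubgroup F n)) : SpecialLinearGroup (Fin n) F).val i i = 1 := by
        show (1 : Matrix (Fin n) (Fin n) F) i i = 1
        exact Matrix.one_apply_eq i
      rw [h1]
      exact ⟨Subring.one_mem _, 1, Subring.one_mem _, one_mul 1⟩
  mul_mem' := by
    rintro g h ⟨hg1, hg2⟩ ⟨hh1, hh2⟩
    have hσ2 : ∀ i j, j ≠ i → (g : SpecialLinearGroup (Fin n) F).val i j = 0 :=
      fun i j hj => hg1 i j (Ne.symm hj)
    have hmul : ∀ i j, ((g * h : ↥(monomialSubgroup F n)) : SpecialLinearGroup (Fin n) F).val i j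
        = (g : SpecialLinearGroup (Fin n) F).val i i
          * (h : SpecialLinearGroup (Fin n) F).val i j := by
      intro i j
      have : ((g * h : ↥(monomialSubgroup F n)) : SpecialLinearGroup (Fin n) F)
          = (g : SpecialLinearGroup (Fin n) F) * (h : SpecialLinearGroup (Fin n) F) := rfl
      rw [this, Matrix.SpecialLinearGroup.coe_mul]
      exact mul_entry (σ := 1) (fun i j hj => hσ2 i j (by simpa using hj)) i j
  -- here σ = 1 : Perm, σ i = i
    constructor
    · intro i j hij
      rw [hmul]
      rcases eq_or_ne i j with rfl | hij'
      · exact absurd rfl hij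
      · rw [hh1 i j hij', mul_zero]
    · intro i
      obtain ⟨wg, hwg, hwg1⟩ := (hg2 i).2
      obtain ⟨wh, hwh, hwh1⟩ := (hh2 i).2
      refine ⟨by rw [hmul]; exact Subring.mul_mem _ (hg2 i).1 (hh2 i).1,
        wg * wh, Subring.mul_mem _ hwg hwh, ?_⟩
      rw [hmul]
      calc (g : SpecialLinearGroup (Fin n) F).val i i
            * (h : SpecialLinearGroup (Fin n) F).val i i * (wg * wh)
          = ((g : SpecialLinearGroup (Fin n) F).val i i * wg)
            * ((h : SpecialLinearGroup (Fin n) F).val i i * wh) := by ring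
        _ = 1 := by rw [hwg1, hwh1, one_mul]
  inv_mem' := by
    rintro g ⟨hg1, hg2⟩
    have hne : ∀ i, (g : SpecialLinearGroup (Fin n) F).val i i ≠ 0 := by
      intro i h0
      obtain ⟨w, _, hw⟩ := (hg2 i).2
      rw [h0, zero_mul] at hw
      exact one_ne_zero hw.symm
    have hσ2 : ∀ i j, j ≠ i → (g : SpecialLinearGroup (Fin n) F).val i j = 0 :=
      fun i j hj => hg1 i j (Ne.symm hj)
    have hginv : ((g⁻¹ : ↥(monomialSubgroup F n)) : SpecialLinearGroup (Fin n) F)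
        = (g : SpecialLinearGroup (Fin n) F)⁻¹ := rfl
    have key : ∀ i j, (g : SpecialLinearGroup (Fin n) F).val i i
        * ((g⁻¹ : ↥(monomialSubgroup F n)) : SpecialLinearGroup (Fin n) F).val i j
        = (1 : Matrix (Fin n) (Fin n) F) i j := by
      intro i j
      rw [hginv]
      exact mul_inv_entry (σ := 1) (g : SpecialLinearGroup (Fin n) F)
        (fun i j hj => hσ2 i j (by simpa using hj)) i j
    constructor
    · intro i j hij
      have h := key i j
      rw [Matrix.one_apply_ne hij] at h
      rcases mul_eq_zero.1 h with h' | h'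
      · exact absurd h' (hne i)
      · exact h'
    · intro i
      have hii := key i i
      rw [Matrix.one_apply_eq] at hii
      obtain ⟨w, hw, hw1⟩ := (hg2 i).2
      have hwinv : ((g⁻¹ : ↥(monomialSubgroup F n)) : SpecialLinearGroup (Fin n) F).val i i
          = w := mul_left_cancel₀ (hne i) (by rw [hii, hw1])
      refine ⟨hwinv ▸ hw, (g : SpecialLinearGroup (Fin n) F).val i i, (hg2 i).1, ?_⟩
      rw [mul_comm] at hii
      exact hii

instance diagTSubgroup_normal : (diagTSubgroup F n R).Normal := by
  constructor
  rintro d ⟨hd1, hd2⟩ g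
  obtain ⟨σ, hσ1, hσ2⟩ := g.2
  have hginv : ((g⁻¹ : ↥(monomialSubgroup F n)) : SpecialLinearGroup (Fin n) F)
      = ((g : SpecialLinearGroup (Fin n) F))⁻¹ := rfl
  have keyinv := fun i j => mul_inv_entry (g : SpecialLinearGroup (Fin n) F) hσ2 i j
  have hginv0 : ∀ l j, j ≠ σ⁻¹ l →
      ((g : SpecialLinearGroup (Fin n) F)⁻¹).val l j = 0 := by
    intro l j hj
    have h := keyinv (σ⁻¹ l) j
    rw [show σ (σ⁻¹ l) = l from Equiv.apply_symm_apply σ l] at h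
    rw [Matrix.one_apply_ne' hj] at h
    have hσ1' : (g : SpecialLinearGroup (Fin n) F).val (σ⁻¹ l) l ≠ 0 := by
      have h2 := hσ1 (σ⁻¹ l)
      rwa [show σ (σ⁻¹ l) = l from Equiv.apply_symm_apply σ l] at h2
    rcases mul_eq_zero.1 h with h' | h'
    · exact absurd h' hσ1'
    · exact h'
  have hentry : ∀ i j,
      ((g * d * g⁻¹ : ↥(monomialSubgroup F n)) : SpecialLinearGroup (Fin n) F).val i j
      = (g : SpecialLinearGroup (Fin n) F).val i (σ i)
        * (d : SpecialLinearGroup (Fin n) F).val (σ i) (σ i)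
        * ((g : SpecialLinearGroup (Fin n) F)⁻¹).val (σ i) j := by
    intro i j
    have hco : ((g * d * g⁻¹ : ↥(monomialSubgroup F n)) : SpecialLinearGroup (Fin n) F).val
        = (g : SpecialLinearGroup (Fin n) F).val
          * (d : SpecialLinearGroup (Fin n) F).val
          * ((g : SpecialLinearGroup (Fin n) F)⁻¹).val := by
      show ((g : SpecialLinearGroup (Fin n) F) * (d : SpecialLinearGroup (Fin n) F)
        * ((g : SpecialLinearGroup (Fin n) F))⁻¹).val = _
      rw [Matrix.SpecialLinearGroup.coe_mul, Matrix.SpecialLinearGroup.coe_mul]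
    rw [hco]
    have hgd : ∀ j', ((g : SpecialLinearGroup (Fin n) F).val
        * (d : SpecialLinearGroup (Fin n) F).val) i j'
        = (g : SpecialLinearGroup (Fin n) F).val i (σ i)
          * (d : SpecialLinearGroup (Fin n) F).val (σ i) j' :=
      fun j' => mul_entry hσ2 i j'
    rw [Matrix.mul_apply]
    refine (Finset.sum_eq_single (σ i) (fun l _ hl => ?_)
      (fun hf => absurd (Finset.mem_univ _) hf)).trans (by rw [hgd (σ i)])
    rw [hgd l, hd1 (σ i) l (fun h => hl h.symm), mul_zero, zero_mul]
  constructor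
  · intro i j hij
    rw [hentry, hginv0 (σ i) j (by simpa using hij.symm), mul_zero]
  · intro i
    have h1 : ((g * d * g⁻¹ : ↥(monomialSubgroup F n)) : SpecialLinearGroup (Fin n) F).val i i
        = (d : SpecialLinearGroup (Fin n) F).val (σ i) (σ i) := by
      rw [hentry]
      have h2 := keyinv i i
      rw [Matrix.one_apply_eq] at h2
      calc (g : SpecialLinearGroup (Fin n) F).val i (σ i)
            * (d : SpecialLinearGroup (Fin n) F).val (σ i) (σ i)
            * ((g : SpecialLinearGroup (Fin n) F)⁻¹).val (σ i) i
          = (d : SpecialLinearGroup (Fin n) F).val (σ i) (σ i)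
            * ((g : SpecialLinearGroup (Fin n) F).val i (σ i)
              * ((g : SpecialLinearGroup (Fin n) F)⁻¹).val (σ i) i) := by ring
        _ = (d : SpecialLinearGroup (Fin n) F).val (σ i) (σ i) := by rw [h2, mul_one]
    rw [h1]
    exact hd2 (σ i)

end Generic


variable (k : Type) [Field k]

lemma t_ne_zero : t k ≠ 0 := HahnSeries.single_ne_zero one_ne_zero

lemma one_ne_zero' : (1 : K k) ≠ 0 := by
  have h : ∀ (F : Type) [Field F], (1 : F) ≠ 0 := fun F _ => one_ne_zero
  exact h (K k)

lemma neg_ne_zero' (x : K k) (h : x ≠ 0) : -x ≠ 0 := neg_ne_zero (a := x) |>.2 h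

lemma inv_ne_zero' (x : K k) (h : x ≠ 0) : x⁻¹ ≠ 0 := inv_ne_zero (a := x) h

lemma u_ne_zero : u k ≠ 0 := HahnSeries.C_ne_zero (HahnSeries.single_ne_zero one_ne_zero)

/-- The matrix `w₀ = [[0,1],[−1,0]]` as an element of `SL(2, K)`. -/
def w0SL : SpecialLinearGroup (Fin 2) (K k) :=
  ⟨!![0, 1; -1, 0], by norm_num [Matrix.det_fin_two_of]⟩

/-- The matrix `w₁ = [[0,t],[−t⁻¹,0]]` as an element of `SL(2, K)`. -/
def w1SL : SpecialLinearGroup (Fin 2) (K k) :=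
  ⟨!![0, t k; -(t k)⁻¹, 0], by
    rw [Matrix.det_fin_two_of]
    calc (0 : K k) * 0 - t k * -(t k)⁻¹ = t k * (t k)⁻¹ := by ring
      _ = 1 := mul_inv_cancel₀ (a := t k) (t_ne_zero k)⟩

/-- The matrix `w₂ = [[0,u],[−u⁻¹,0]]` as an element of `SL(2, K)`. -/
def w2SL : SpecialLinearGroup (Fin 2) (K k) :=
  ⟨!![0, u k; -(u k)⁻¹, 0], by
    rw [Matrix.det_fin_two_of]
    calc (0 : K k) * 0 - u k * -(u k)⁻¹ = u k * (u k)⁻¹ := by ring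
      _ = 1 := mul_inv_cancel₀ (a := u k) (u_ne_zero k)⟩

lemma antidiag_mem_monomial (a b : K k) (ha : a ≠ 0) (hb : b ≠ 0)
    (g : SpecialLinearGroup (Fin 2) (K k)) (hg : g.val = !![0, a; b, 0]) :
    g ∈ monomialSubgroup (K k) 2 := by
  refine ⟨Equiv.swap 0 1, ?_, ?_⟩
  · rw [Fin.forall_fin_two, Equiv.swap_apply_left, Equiv.swap_apply_right, hg]
    exact ⟨ha, hb⟩
  · rw [Fin.forall_fin_two, Equiv.swap_apply_left, Equiv.swap_apply_right]
    constructor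
    · rw [Fin.forall_fin_two]
      refine ⟨fun h => ?_, fun h => absurd rfl h⟩
      rw [hg]; rfl
    · rw [Fin.forall_fin_two]
      refine ⟨fun h => absurd rfl h, fun h => ?_⟩
      rw [hg]; rfl

/-- `w₀` as an element of the subgroup `N` of monomial matrices. -/
def w0N : ↥(monomialSubgroup (K k) 2) :=
  ⟨w0SL k, antidiag_mem_monomial k 1 (-1) (one_ne_zero' k) (neg_ne_zero' k 1 (one_ne_zero' k)) _ rfl⟩

/-- `w₁` as an element of the subgroup `N` of monomial matrices. -/
def w1N : ↥(monomialSubgroup (K k) 2) :=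
  ⟨w1SL k, antidiag_mem_monomial k (t k) (-(t k)⁻¹) (t_ne_zero k)
    (neg_ne_zero' k (t k)⁻¹ (inv_ne_zero' k (t k) (t_ne_zero k))) _ rfl⟩

/-- `w₂` as an element of the subgroup `N` of monomial matrices. -/
def w2N : ↥(monomialSubgroup (K k) 2) :=
  ⟨w2SL k, antidiag_mem_monomial k (u k) (-(u k)⁻¹) (u_ne_zero k)
    (neg_ne_zero' k (u k)⁻¹ (inv_ne_zero' k (u k) (u_ne_zero k))) _ rfl⟩

/-- The Weyl group `W = N/T` of `SL(2, K)`. -/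
abbrev Weyl := ↥(monomialSubgroup (K k) 2) ⧸ diagTSubgroup (K k) 2 (Oprime k)

/-- The relations `w₀² = w₁² = w₂² = e`, `(w₀w₁w₂)² = e`. -/
def weylRels : Set (FreeGroup (Fin 3)) :=
  {FreeGroup.of 0 * FreeGroup.of 0, FreeGroup.of 1 * FreeGroup.of 1,
    FreeGroup.of 2 * FreeGroup.of 2,
    (FreeGroup.of 0 * FreeGroup.of 1 * FreeGroup.of 2) ^ 2}

end TwoDimLocal

/-!
A monomial matrix in `SL(2, K)` is `diag(c, c⁻¹)` or `[[0, a], [-a⁻¹, 0]]`, and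
`diag(c, c⁻¹) ∈ T` exactly when `ν'(c) = 0`. So `ν'` identifies the diagonal part of `W` with
`ℤ²`, the classes of `w₁w₀ = diag(-t, -t⁻¹)` and `w₂w₀ = diag(-u, -u⁻¹)` going to the standard
basis, and together with `w₀` they exhaust `W`. In the presented group the relations make `x₁x₀`
and `x₂x₀` commute and be inverted by `x₀`, so every element is `(x₁x₀)^m (x₂x₀)^n x₀^ε`. Its
image is diagonal with `ν' = (m, n)` if `ε = 0` and antidiagonal if `ε = 1`, hence it is trivial
only for the identity.
-/

section Involutions

variable {G : Type*} [Group G] {a b c : G}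

lemma commute_mul_mul_of_sq_eq_one (ha : a * a = 1) (hb : b * b = 1) (hc : c * c = 1)
    (habc : (a * b * c) ^ 2 = 1) : Commute (b * a) (c * a) := by
  rw [sq] at habc
  have hcab : c * a * b = b * a * c :=
    calc c * a * b = b⁻¹ * a⁻¹ * ((a * b * c) * (a * b * c)) * c⁻¹ := by group
      _ = b * a * c := by
        rw [habc, inv_eq_of_mul_eq_one_right ha, inv_eq_of_mul_eq_one_right hb,
          inv_eq_of_mul_eq_one_right hc, mul_one]
  calc b * a * (c * a) = c * a * b * a := by rw [hcab]; group
    _ = c * a * (b * a) := by group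

lemma mul_zpow_mul_zpow_of_sq_eq_one (ha : a * a = 1) (hb : b * b = 1) (hc : c * c = 1)
    (m n : ℤ) : a * ((b * a) ^ m * (c * a) ^ n) = (b * a) ^ (-m) * (c * a) ^ (-n) * a := by
  have hinv : ∀ x, x * x = 1 → SemiconjBy a (x * a) (x * a)⁻¹ := fun x hx => by
    rw [SemiconjBy, mul_inv_rev, inv_eq_of_mul_eq_one_right ha, inv_eq_of_mul_eq_one_right hx]
    group
  rw [← mul_assoc, (hinv b hb).zpow_right m, mul_assoc, (hinv c hc).zpow_right n, inv_zpow',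
    inv_zpow', mul_assoc]

lemma exists_zpow_mul_zpow_of_mem_closure (ha : a * a = 1) (hb : b * b = 1) (hc : c * c = 1)
    (habc : (a * b * c) ^ 2 = 1) {x : G} (hx : x ∈ Subgroup.closure {a, b, c}) :
    ∃ m n : ℤ, x = (b * a) ^ m * (c * a) ^ n ∨ x = (b * a) ^ m * (c * a) ^ n * a := by
  have hcomm := commute_mul_mul_of_sq_eq_one ha hb hc habc
  have hswap := mul_zpow_mul_zpow_of_sq_eq_one ha hb hc
  have hmul (i j m n : ℤ) : (b * a) ^ i * (c * a) ^ j * ((b * a) ^ m * (c * a) ^ n)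
      = (b * a) ^ (i + m) * (c * a) ^ (j + n) := by
    rw [zpow_add, zpow_add, mul_assoc, ← mul_assoc ((c * a) ^ j), (hcomm.zpow_zpow m j).eq.symm]
    group
  have hgen : ∀ g ∈ ({a, b, c} : Set G),
      g⁻¹ = g ∧ ∃ i j : ℤ, g = (b * a) ^ i * (c * a) ^ j * a := by
    rintro g (rfl | rfl | rfl)
    · exact ⟨inv_eq_of_mul_eq_one_right ha, 0, 0, by simp⟩
    · exact ⟨inv_eq_of_mul_eq_one_right hb, 1, 0, by simp [mul_assoc, ha]⟩
    · exact ⟨inv_eq_of_mul_eq_one_right hc, 0, 1, by simp [mul_assoc, ha]⟩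
  have hstep : ∀ g ∈ ({a, b, c} : Set G), ∀ y, (∃ m n : ℤ, y = (b * a) ^ m * (c * a) ^ n ∨
      y = (b * a) ^ m * (c * a) ^ n * a) → ∃ m n : ℤ, g * y = (b * a) ^ m * (c * a) ^ n ∨
      g * y = (b * a) ^ m * (c * a) ^ n * a := by
    rintro g hg y ⟨m, n, rfl | rfl⟩ <;> obtain ⟨-, i, j, rfl⟩ := hgen g hg
    · refine ⟨i - m, j - n, Or.inr ?_⟩
      rw [mul_assoc, hswap, ← mul_assoc, hmul]
      group
    · refine ⟨i - m, j - n, Or.inl ?_⟩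
      rw [mul_assoc, ← mul_assoc a, hswap, mul_assoc _ a a, ha, mul_one, hmul]
      group
  induction hx using Subgroup.closure_induction_left with
  | one => exact ⟨0, 0, Or.inl (by simp)⟩
  | mul_left g hg y _ hy => exact hstep g hg y hy
  | inv_mul_cancel g hg y _ hy =>
    rw [(hgen g hg).1]
    exact hstep g hg y hy

end Involutions

namespace TwoDimLocal

open Matrix

variable (k : Type) [Field k]

section MonomialTwo

variable {F : Type} [Field F]

def diagSL (c : Fˣ) : SpecialLinearGroup (Fin 2) F :=
  ⟨!![(c : F), 0; 0, ↑c⁻¹], by simp [Matrix.det_fin_two_of]⟩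

def antidiagSL (a : Fˣ) : SpecialLinearGroup (Fin 2) F :=
  ⟨!![0, (a : F); -↑a⁻¹, 0], by simp [Matrix.det_fin_two_of]⟩

lemma diagSL_mul_diagSL (c d : Fˣ) : diagSL c * diagSL d = diagSL (c * d) := by
  ext i j
  rw [Matrix.SpecialLinearGroup.coe_mul]
  fin_cases i <;> fin_cases j <;> simp [diagSL, Matrix.mul_apply, mul_comm]

lemma diagSL_mul_antidiagSL (c a : Fˣ) : diagSL c * antidiagSL a = antidiagSL (c * a) := by
  ext i j
  rw [Matrix.SpecialLinearGroup.coe_mul]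
  fin_cases i <;> fin_cases j <;> simp [diagSL, antidiagSL, Matrix.mul_apply, mul_comm]

lemma antidiagSL_mul_antidiagSL (a b : Fˣ) :
    antidiagSL a * antidiagSL b = diagSL (-(a * b⁻¹)) := by
  ext i j
  rw [Matrix.SpecialLinearGroup.coe_mul]
  fin_cases i <;> fin_cases j <;> simp [diagSL, antidiagSL, Matrix.mul_apply, mul_comm]

def diagMonomial : Fˣ →* monomialSubgroup F 2 where
  toFun c := ⟨diagSL c, 1, by simp [diagSL, Fin.forall_fin_two],
    by simp [diagSL, Fin.forall_fin_two]⟩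
  map_one' := Subtype.ext <| by ext i j; fin_cases i <;> fin_cases j <;> rfl
  map_mul' c d := Subtype.ext (diagSL_mul_diagSL c d).symm

def antidiagMonomial (a : Fˣ) : monomialSubgroup F 2 :=
  ⟨antidiagSL a, Equiv.swap 0 1, by simp [antidiagSL, Fin.forall_fin_two],
    by simp [antidiagSL, Fin.forall_fin_two]⟩

lemma diagMonomial_mul_antidiagMonomial (c a : Fˣ) :
    diagMonomial c * antidiagMonomial a = antidiagMonomial (c * a) :=
  Subtype.ext (diagSL_mul_antidiagSL c a)

lemma antidiagMonomial_mul_antidiagMonomial (a b : Fˣ) :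
    antidiagMonomial a * antidiagMonomial b = diagMonomial (-(a * b⁻¹)) :=
  Subtype.ext (antidiagSL_mul_antidiagSL a b)

lemma exists_diagMonomial_or_antidiagMonomial (g : monomialSubgroup F 2) :
    (∃ c, diagMonomial c = g) ∨ ∃ a, antidiagMonomial a = g := by
  obtain ⟨σ, -, hσ⟩ := g.2
  have hdet := g.1.2
  rw [Matrix.det_fin_two] at hdet
  have hσ1 : σ 1 ≠ σ 0 := σ.injective.ne (by decide)
  rcases (by omega : σ 0 = 0 ∨ σ 0 = 1) with h0 | h0
  · have h01 : g.1 0 1 = 0 := hσ 0 1 (by rw [h0]; decide)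
    have h10 : g.1 1 0 = 0 := hσ 1 0 (by omega)
    rw [h01, h10, mul_zero, sub_zero] at hdet
    refine Or.inl ⟨⟨g.1 0 0, g.1 1 1, hdet, by rw [mul_comm, hdet]⟩, Subtype.ext ?_⟩
    ext i j
    fin_cases i <;> fin_cases j <;>
      simp [diagMonomial, diagSL, h01, h10, inv_eq_of_mul_eq_one_right hdet]
  · have h00 : g.1 0 0 = 0 := hσ 0 0 (by rw [h0]; decide)
    have h11 : g.1 1 1 = 0 := hσ 1 1 (by omega)
    rw [h00, h11, zero_mul, zero_sub, ← mul_neg] at hdet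
    refine Or.inr ⟨⟨g.1 0 1, -g.1 1 0, hdet, by rw [mul_comm, hdet]⟩, Subtype.ext ?_⟩
    ext i j
    fin_cases i <;> fin_cases j <;> simp [antidiagMonomial, antidiagSL, h00, h11]

variable {R : Subring F}

lemma diagMonomial_mem_diagTSubgroup_iff (c : Fˣ) :
    diagMonomial c ∈ diagTSubgroup F 2 R ↔ (c : F) ∈ R ∧ ((c⁻¹ : Fˣ) : F) ∈ R := by
  refine ⟨fun ⟨_, h⟩ => ⟨(h 0).1, (h 1).1⟩, fun ⟨hc, hc'⟩ => ⟨?_, ?_⟩⟩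
  · simp [diagMonomial, diagSL, Fin.forall_fin_two]
  · rw [Fin.forall_fin_two]
    exact ⟨⟨hc, _, hc', c.mul_inv⟩, ⟨hc', _, hc, c.inv_mul⟩⟩

lemma antidiagMonomial_not_mem_diagTSubgroup (a : Fˣ) :
    antidiagMonomial a ∉ diagTSubgroup F 2 R := by
  rintro ⟨-, h⟩
  obtain ⟨-, w, -, hw⟩ := h 0
  simp [antidiagMonomial, antidiagSL] at hw

end MonomialTwo

section Valuation

variable {k}

lemma nu_mul {x y : K k} (hx : x ≠ 0) (hy : y ≠ 0) : nu k (x * y) = nu k x + nu k y := by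
  have hx' : x.coeff x.order ≠ 0 := fun h => hx (coeff_order_eq_zero.1 h)
  have hy' : y.coeff y.order ≠ 0 := fun h => hy (coeff_order_eq_zero.1 h)
  have hlead : (x * y).coeff (x * y).order = x.coeff x.order * y.coeff y.order := by
    simpa [order_mul hx hy, leadingCoeff_eq] using coeff_mul_order_add_order x y
  unfold nu
  rw [hlead, order_mul hx hy, order_mul hx' hy']
  rfl

lemma nu_one : nu k 1 = 0 := by
  simp [nu]

lemma nu_neg (x : K k) : nu k (-x) = nu k x := by
  simp [nu]

lemma nu_t : nu k (t k) = toLex (1, 0) := by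
  simp [nu, t]

lemma nu_u : nu k (u k) = toLex (0, 1) := by
  simp [nu, u]

lemma nu_inv {x : K k} (hx : x ≠ 0) : nu k x⁻¹ = -nu k x := by
  have h := nu_mul hx (inv_ne_zero hx)
  rw [mul_inv_cancel₀ hx, nu_one] at h
  exact eq_neg_of_add_eq_zero_right h.symm

lemma mem_Oprime_iff_nu_nonneg {x : K k} (hx : x ≠ 0) : x ∈ Oprime k ↔ 0 ≤ nu k x := by
  have hlead : x.coeff x.order ≠ 0 := fun h => hx (coeff_order_eq_zero.1 h)
  change _ ↔ toLex (0, 0) ≤ toLex (x.order, (x.coeff x.order).order)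
  rw [Prod.Lex.toLex_le_toLex]
  dsimp only
  constructor
  · rintro ⟨hOK, hcoeff⟩
    rcases (order_nonneg_of_support (K1 k) hx hOK).lt_or_eq with ho | ho
    · exact Or.inl ho
    · exact Or.inr ⟨ho, order_nonneg_of_support k hlead (ho ▸ hcoeff)⟩
  · intro h
    refine ⟨fun n hn => coeff_eq_zero_of_lt_order (by omega), ?_⟩
    rcases h with ho | ⟨ho, hcoeff⟩
    · rw [coeff_eq_zero_of_lt_order ho]
      exact zero_mem _
    · rw [ho]
      exact fun n hn => coeff_eq_zero_of_lt_order (by omega)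

lemma nu_eq_zero_iff {x : K k} (hx : x ≠ 0) :
    nu k x = 0 ↔ x ∈ Oprime k ∧ x⁻¹ ∈ Oprime k := by
  rw [mem_Oprime_iff_nu_nonneg hx, mem_Oprime_iff_nu_nonneg (inv_ne_zero hx), nu_inv hx,
    neg_nonneg, le_antisymm_iff, and_comm]

end Valuation

section WeylGroup

variable {k}

def nuUnits : (K k)ˣ →* Multiplicative (ℤ ×ₗ ℤ) where
  toFun c := Multiplicative.ofAdd (nu k c)
  map_one' := by simp [nu_one]
  map_mul' c d := by simp [nu_mul c.ne_zero d.ne_zero, ofAdd_add]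

variable (k) in
def tUnit : (K k)ˣ := Units.mk0 (t k) (t_ne_zero k)

variable (k) in
def uUnit : (K k)ˣ := Units.mk0 (u k) (u_ne_zero k)

lemma nuUnits_zpow_mul_zpow (m n : ℤ) :
    nuUnits ((-tUnit k) ^ m * (-uUnit k) ^ n) = Multiplicative.ofAdd (toLex (m, n)) := by
  have ht : nuUnits (-tUnit k) = Multiplicative.ofAdd (toLex (1, 0)) := by
    simp [nuUnits, tUnit, nu_neg, nu_t]
  have hu : nuUnits (-uUnit k) = Multiplicative.ofAdd (toLex (0, 1)) := by
    simp [nuUnits, uUnit, nu_neg, nu_u]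
  rw [map_mul, map_zpow, map_zpow, ht, hu, ← ofAdd_zsmul, ← ofAdd_zsmul, ← ofAdd_add]
  congr 1
  exact congrArg toLex (show m • ((1 : ℤ), (0 : ℤ)) + n • (0, 1) = (m, n) by simp)

def weylDiag : (K k)ˣ →* Weyl k := (QuotientGroup.mk' _).comp diagMonomial

lemma weylDiag_eq_one_iff (c : (K k)ˣ) : weylDiag c = 1 ↔ nuUnits c = 1 := by
  rw [weylDiag, MonoidHom.comp_apply, QuotientGroup.mk'_apply, QuotientGroup.eq_one_iff,
    diagMonomial_mem_diagTSubgroup_iff, Units.val_inv_eq_inv_val, ← nu_eq_zero_iff c.ne_zero]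
  exact ofAdd_eq_one.symm

lemma weylDiag_eq_iff (c d : (K k)ˣ) : weylDiag c = weylDiag d ↔ nuUnits c = nuUnits d := by
  rw [← div_eq_one, ← map_div, weylDiag_eq_one_iff, map_div, div_eq_one]

lemma mk_antidiagMonomial_ne_one (a : (K k)ˣ) :
    (QuotientGroup.mk (antidiagMonomial a) : Weyl k) ≠ 1 :=
  fun h => antidiagMonomial_not_mem_diagTSubgroup a ((QuotientGroup.eq_one_iff _).1 h)

lemma mk_antidiagMonomial_sq (a : (K k)ˣ) :
    (QuotientGroup.mk (antidiagMonomial a) : Weyl k) ^ 2 = 1 := by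
  rw [sq, ← QuotientGroup.mk_mul, antidiagMonomial_mul_antidiagMonomial, mul_inv_cancel]
  exact (weylDiag_eq_one_iff _).2 (by simp [nuUnits, nu_neg, nu_one])

lemma w0N_eq_antidiagMonomial : w0N k = antidiagMonomial 1 := by
  ext i j
  fin_cases i <;> fin_cases j <;> rfl

lemma w1N_eq_antidiagMonomial : w1N k = antidiagMonomial (tUnit k) := by
  ext i j
  fin_cases i <;> fin_cases j <;> rfl

lemma w2N_eq_antidiagMonomial : w2N k = antidiagMonomial (uUnit k) := by
  ext i j
  fin_cases i <;> fin_cases j <;> rfl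

variable (k) in
def weylGens : Fin 3 → Weyl k :=
  ![QuotientGroup.mk (w0N k), QuotientGroup.mk (w1N k), QuotientGroup.mk (w2N k)]

lemma weylGens_rels : ∀ r ∈ weylRels, FreeGroup.lift (weylGens k) r = 1 := by
  simp only [weylRels, Set.mem_insert_iff, Set.mem_singleton_iff]
  rintro r (rfl | rfl | rfl | rfl) <;>
    simp only [map_mul, map_pow, FreeGroup.lift_apply_of, weylGens, Matrix.cons_val,
      w0N_eq_antidiagMonomial, w1N_eq_antidiagMonomial, w2N_eq_antidiagMonomial, ← sq,
      mk_antidiagMonomial_sq]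
  rw [← QuotientGroup.mk_mul, ← QuotientGroup.mk_mul, antidiagMonomial_mul_antidiagMonomial,
    diagMonomial_mul_antidiagMonomial, mk_antidiagMonomial_sq]

end WeylGroup

section Presentation

variable {k}

open PresentedGroup

lemma of_mul_of_self {α : Type*} {rels : Set (FreeGroup α)} {i : α}
    (hi : FreeGroup.of i * FreeGroup.of i ∈ rels) : (of i : PresentedGroup rels) * of i = 1 := by
  rw [← one_of_mem hi, map_mul]
  rfl

lemma of_mul_of_mul_of_sq : ((of 0 : PresentedGroup weylRels) * of 1 * of 2) ^ 2 = 1 := by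
  rw [← one_of_mem (rels := weylRels)
    (x := (FreeGroup.of 0 * FreeGroup.of 1 * FreeGroup.of 2) ^ 2) (by simp [weylRels]),
    map_pow, map_mul, map_mul]
  rfl

variable (k) in
def weylHom : PresentedGroup weylRels →* Weyl k := toGroup weylGens_rels

lemma weylHom_of (i : Fin 3) : weylHom k (of i) = weylGens k i := toGroup.of _

lemma weylHom_zpow_mul_zpow (m n : ℤ) :
    weylHom k ((of 1 * of 0) ^ m * (of 2 * of 0) ^ n)
      = weylDiag ((-tUnit k) ^ m * (-uUnit k) ^ n) := by
  have h (a : (K k)ˣ) : QuotientGroup.mk (antidiagMonomial a) * QuotientGroup.mk (w0N k)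
      = weylDiag (-a) := by
    rw [w0N_eq_antidiagMonomial, ← QuotientGroup.mk_mul, antidiagMonomial_mul_antidiagMonomial,
      inv_one, mul_one]
    rfl
  simp only [map_mul, map_zpow, weylHom_of, weylGens, Matrix.cons_val, w1N_eq_antidiagMonomial,
    w2N_eq_antidiagMonomial, h]

lemma mk_antidiagMonomial_eq (a : (K k)ˣ) :
    (QuotientGroup.mk (antidiagMonomial a) : Weyl k) = weylDiag a * weylHom k (of 0) := by
  rw [weylHom_of, weylGens, Matrix.cons_val_zero, w0N_eq_antidiagMonomial, weylDiag,
    MonoidHom.comp_apply, QuotientGroup.mk'_apply, ← QuotientGroup.mk_mul,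
    diagMonomial_mul_antidiagMonomial, mul_one]

lemma weylDiag_mem_range (c : (K k)ˣ) : weylDiag c ∈ (weylHom k).range := by
  let v := ofLex (Multiplicative.toAdd (nuUnits c))
  refine ⟨(of 1 * of 0) ^ v.1 * (of 2 * of 0) ^ v.2, ?_⟩
  rw [weylHom_zpow_mul_zpow, weylDiag_eq_iff, nuUnits_zpow_mul_zpow]
  rfl

lemma weylHom_surjective : Function.Surjective (weylHom k) := by
  intro w
  obtain ⟨g, rfl⟩ := QuotientGroup.mk_surjective w
  obtain ⟨c, rfl⟩ | ⟨a, rfl⟩ := exists_diagMonomial_or_antidiagMonomial g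
  · exact weylDiag_mem_range c
  · obtain ⟨x, hx⟩ := weylDiag_mem_range a
    exact ⟨x * of 0, by rw [map_mul, hx, mk_antidiagMonomial_eq]⟩

lemma weylHom_injective : Function.Injective (weylHom k) := by
  rw [injective_iff_map_eq_one]
  intro x hx
  have hgen : x ∈ Subgroup.closure {of 0, of 1, of 2} := by
    refine Subgroup.closure_mono ?_ ((closure_range_of weylRels).ge (Subgroup.mem_top x))
    rintro _ ⟨i, rfl⟩
    fin_cases i <;> simp
  obtain ⟨m, n, rfl | rfl⟩ := exists_zpow_mul_zpow_of_mem_closure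
    (of_mul_of_self (by simp [weylRels])) (of_mul_of_self (by simp [weylRels]))
    (of_mul_of_self (by simp [weylRels])) of_mul_of_mul_of_sq hgen
  · rw [weylHom_zpow_mul_zpow, weylDiag_eq_one_iff, nuUnits_zpow_mul_zpow] at hx
    obtain ⟨rfl, rfl⟩ : m = 0 ∧ n = 0 := by simpa using hx
    simp
  · rw [map_mul, weylHom_zpow_mul_zpow, ← mk_antidiagMonomial_eq] at hx
    exact absurd hx (mk_antidiagMonomial_ne_one _)

end Presentation

/-- For `n = 2` the Weyl group `W = N/T` has the presentation
`⟨w₀, w₁, w₂ | w₀² = w₁² = w₂² = e, (w₀w₁w₂)² = e⟩`: the homomorphism from the presented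
group to `W` sending the generators to the classes of `[[0,1],[−1,0]]`, `[[0,t],[−t⁻¹,0]]`,
`[[0,u],[−u⁻¹,0]]` is an isomorphism. -/
theorem weyl_group_presentation :
    ∃ φ : PresentedGroup (weylRels) →* Weyl k,
      φ (PresentedGroup.of 0) = QuotientGroup.mk (w0N k) ∧
      φ (PresentedGroup.of 1) = QuotientGroup.mk (w1N k) ∧
      φ (PresentedGroup.of 2) = QuotientGroup.mk (w2N k) ∧
      Function.Bijective φ :=
  ⟨weylHom k, weylHom_of 0, weylHom_of 1, weylHom_of 2, weylHom_injective, weylHom_surjective⟩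

end TwoDimLocal
end
end
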